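/- arXiv:1410.3589 — 2 statements merged into one kernel-verified Lean document; each statement's English description precedes it below -/
import Mathlib

section
/- Let G ≤ H be divisible ordered abelian groups. If there exist convex subgroups C₁ ⊴ C₂ ⊴ H such that C₂ is order-isomorphic to G × C₁ with the lexicographic order (via an isomorphism restricting to the inclusion of G), then for every x ∈ H, if there exists y ∈ G with |x| < |y|, then there exists z ∈ G with |x - z| < g for every positive g ∈ G. -/
/-! By convexity `x` lies in `C₂`, since it is bounded by an element of `G ⊆ C₂`; take
`z := (φ x).1 ∈ G`. Because `φ` fixes `G`, the difference `x - z` has first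
coordinate `0`, and in the lexicographic order every element with first coordinate `0` lies
strictly below every positive element of `G`. Applying this to `±(x - z)` gives `|x - z| < g`. -/

theorem AddSubgroup.mem_of_abs_le_abs {H : Type*} [AddCommGroup H] [LinearOrder H]
    [IsOrderedAddMonoid H]
    {C : AddSubgroup H} (hC : ∀ a b : H, 0 ≤ a → a ≤ b → b ∈ C → a ∈ C)
    {x y : H} (hy : y ∈ C) (hxy : |x| ≤ |y|) : x ∈ C :=
  abs_mem_iff.mp (hC |x| |y| (abs_nonneg x) hxy (abs_mem_iff.mpr hy))

section LexProduct

variable {H : Type*} [AddCommGroup H] {G C₁ C₂ : AddSubgroup H} {hGC₂ : G ≤ C₂} {φ : C₂ →+ G × C₁}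

theorem coe_lt_of_fst_map_eq_zero [LinearOrder H]
    (hφord : ∀ a b : C₂, (a : H) ≤ (b : H) ↔
      (((φ a).1 : H) < ((φ b).1 : H) ∨
        ((φ a).1 = (φ b).1 ∧ ((φ a).2 : H) ≤ ((φ b).2 : H))))
    (hφres : ∀ g : H, ∀ hg : g ∈ G, φ ⟨g, hGC₂ hg⟩ = (⟨g, hg⟩, 0))
    {c : C₂} (hc : (φ c).1 = 0) {g : H} (hg : g ∈ G) (hg_pos : 0 < g) : (c : H) < g := by
  by_contra! hle
  rcases (hφord ⟨g, hGC₂ hg⟩ c).mp hle with hlt | ⟨heq, -⟩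
  · simp only [hφres g hg, hc, ZeroMemClass.coe_zero] at hlt
    exact hlt.not_gt hg_pos
  · simp only [hφres g hg, hc] at heq
    exact hg_pos.ne' (congrArg Subtype.val heq)

theorem fst_map_sub_fst_map_eq_zero
    (hφres : ∀ g : H, ∀ hg : g ∈ G, φ ⟨g, hGC₂ hg⟩ = (⟨g, hg⟩, 0)) (a : C₂) :
    (φ (a - ⟨(φ a).1, hGC₂ (φ a).1.2⟩)).1 = 0 := by
  rw [map_sub, hφres _ (φ a).1.2]
  simp

end LexProduct

theorem exists_infinitesimally_close_of_lex_decomposition_general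
    {H : Type*} [AddCommGroup H] [LinearOrder H] [IsOrderedAddMonoid H] (G : AddSubgroup H)
    (C₁ C₂ : AddSubgroup H)
    (hC₂convex : ∀ a b : H, 0 ≤ a → a ≤ b → b ∈ C₂ → a ∈ C₂)
    (hGC₂ : G ≤ C₂)
    (φ : C₂ →+ G × C₁)
    (hφord : ∀ a b : C₂, (a : H) ≤ (b : H) ↔
      (((φ a).1 : H) < ((φ b).1 : H) ∨
        ((φ a).1 = (φ b).1 ∧ ((φ a).2 : H) ≤ ((φ b).2 : H))))
    (hφres : ∀ g : H, ∀ hg : g ∈ G, φ ⟨g, hGC₂ hg⟩ = (⟨g, hg⟩, 0)) :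
    ∀ x : H, (∃ y ∈ G, |x| < |y|) → ∃ z ∈ G, ∀ g ∈ G, 0 < g → |x - z| < g := by
  rintro x ⟨y, hyG, hxy⟩
  have hxC₂ : x ∈ C₂ := AddSubgroup.mem_of_abs_le_abs hC₂convex (hGC₂ hyG) hxy.le
  set a : C₂ := ⟨x, hxC₂⟩
  set d : C₂ := a - ⟨(φ a).1, hGC₂ (φ a).1.2⟩
  have hd : (φ d).1 = 0 := fst_map_sub_fst_map_eq_zero hφres a
  have hnegd : (φ (-d)).1 = 0 := by rw [map_neg, Prod.fst_neg, hd, neg_zero]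
  refine ⟨(φ a).1, (φ a).1.2, fun g hg hg_pos => abs_lt.mpr ⟨?_, ?_⟩⟩
  · exact neg_lt.mp (coe_lt_of_fst_map_eq_zero hφord hφres hnegd hg hg_pos)
  · exact coe_lt_of_fst_map_eq_zero hφord hφres hd hg hg_pos

/-- Let `G ≤ H` be divisible ordered abelian groups. If there are convex
subgroups `C₁ ⊴ C₂ ⊴ H` with `C₂ ≅ G ×ₗ C₁` (lexicographic order) via an
additive order isomorphism restricting to the inclusion of `G`, then every
`x ∈ H` bounded by some element of `G` is infinitesimally close to some
element of `G`. -/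
theorem exists_infinitesimally_close_of_lex_decomposition
    {H : Type*} [AddCommGroup H] [LinearOrder H] [IsOrderedAddMonoid H] (G : AddSubgroup H)
    (hHdiv : ∀ x : H, ∀ n : ℕ, 0 < n → ∃ y : H, n • y = x)
    (hGdiv : ∀ x ∈ G, ∀ n : ℕ, 0 < n → ∃ y ∈ G, n • y = x)
    (C₁ C₂ : AddSubgroup H)
    (hC₁convex : ∀ a b : H, 0 ≤ a → a ≤ b → b ∈ C₁ → a ∈ C₁)
    (hC₂convex : ∀ a b : H, 0 ≤ a → a ≤ b → b ∈ C₂ → a ∈ C₂)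
    (hC₁C₂ : C₁ ≤ C₂) (hGC₂ : G ≤ C₂)
    (φ : C₂ →+ G × C₁) (hφbij : Function.Bijective φ)
    (hφord : ∀ a b : C₂, (a : H) ≤ (b : H) ↔
      (((φ a).1 : H) < ((φ b).1 : H) ∨
        ((φ a).1 = (φ b).1 ∧ ((φ a).2 : H) ≤ ((φ b).2 : H))))
    (hφres : ∀ g : H, ∀ hg : g ∈ G, φ ⟨g, hGC₂ hg⟩ = (⟨g, hg⟩, 0)) :
    ∀ x : H, (∃ y ∈ G, |x| < |y|) → ∃ z ∈ G, ∀ g ∈ G, 0 < g → |x - z| < g :=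
  exists_infinitesimally_close_of_lex_decomposition_general G C₁ C₂ hC₂convex hGC₂ φ hφord hφres
end

section
/- Let G, H be divisible ordered abelian groups with G ≤ H. Suppose that for all x ∈ H, if there is y ∈ G with |x| < |y| then there is z ∈ G with |x - z| < g for all positive g ∈ G. Then no element of H realizes a cut over G: for every a ∈ H ∖ G, either a > G, or a < G, or there exists b ∈ G such that a realizes b⁺ or b⁻ over G (i.e., the set {x ∈ G : x < a} has a supremum-like behavior: it has a maximum, or its complement in G has a minimum, or it is empty or all of G). -/
/-! If `a ∉ G` lies between two elements of `G`, it is bounded by an element of `G`, so the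
hypothesis yields `z ∈ G` with `a - z` infinitesimal over `G`. Then `a` realizes `z⁺` or `z⁻`:
any `c ∈ G` strictly between `z` and `a` (or equal to `a`) would give the positive element
`|c - z| ∈ G` below `|a - z|`. -/

section

variable {α : Type*} [AddCommGroup α] [LinearOrder α] [IsOrderedAddMonoid α]

theorem abs_lt_max_abs_abs {a b c : α} (hab : a < b) (hbc : b < c) : |b| < max |a| |c| :=
  abs_lt.mpr
    ⟨(neg_le_neg (le_max_left _ _)).trans_lt ((neg_abs_le a).trans_lt hab),
      hbc.trans_le ((le_abs_self c).trans (le_max_right _ _))⟩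

namespace AddSubgroup

variable {G : AddSubgroup α}

theorem exists_abs_lt_abs_of_lt_of_lt {x a y : α} (hx : x ∈ G) (hy : y ∈ G) (hxa : x < a)
    (hay : a < y) : ∃ w ∈ G, |a| < |w| := by
  rcases max_choice |x| |y| with h | h
  · exact ⟨x, hx, h ▸ abs_lt_max_abs_abs hxa hay⟩
  · exact ⟨y, hy, h ▸ abs_lt_max_abs_abs hxa hay⟩

theorem notMem_Ioc_of_forall_abs_sub_lt {a z : α} (hz : z ∈ G)
    (hinf : ∀ g ∈ G, 0 < g → |a - z| < g) {c : α} (hc : c ∈ G) : c ∉ Set.Ioc z a :=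
  fun ⟨hzc, hca⟩ =>
    ((le_abs_self _).trans_lt (hinf (c - z) (G.sub_mem hc hz) (sub_pos.mpr hzc))).not_ge
      (sub_le_sub_right hca z)

theorem notMem_Ico_of_forall_abs_sub_lt {a z : α} (hz : z ∈ G)
    (hinf : ∀ g ∈ G, 0 < g → |a - z| < g) {c : α} (hc : c ∈ G) : c ∉ Set.Ico a z :=
  fun ⟨hac, hcz⟩ => by
    have hlt := hinf (z - c) (G.sub_mem hz hc) (sub_pos.mpr hcz)
    rw [abs_sub_comm] at hlt
    exact ((le_abs_self _).trans_lt hlt).not_ge (sub_le_sub_left hac z)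

end AddSubgroup

end

theorem no_cut_of_infinitesimal_approximation_general
    {H : Type*} [AddCommGroup H] [LinearOrder H] [IsOrderedAddMonoid H] (G : AddSubgroup H)
    (happrox : ∀ x : H, (∃ y ∈ G, |x| < |y|) →
      ∃ z ∈ G, ∀ g ∈ G, 0 < g → |x - z| < g) :
    ∀ a : H, a ∉ G →
      (∀ x ∈ G, x < a) ∨ (∀ x ∈ G, a < x) ∨
      (∃ b ∈ G, (b < a ∧ ∀ c ∈ G, ¬ (b < c ∧ c ≤ a)) ∨
                (a < b ∧ ∀ c ∈ G, ¬ (a ≤ c ∧ c < b))) := by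
  intro a ha
  by_cases hup : ∀ x ∈ G, x < a
  · exact Or.inl hup
  by_cases hdown : ∀ x ∈ G, a < x
  · exact Or.inr (Or.inl hdown)
  push Not at hup hdown
  obtain ⟨y, hyG, hay⟩ := hup
  obtain ⟨x, hxG, hxa⟩ := hdown
  have hne {w : H} (hw : w ∈ G) : w ≠ a := fun h => ha (h ▸ hw)
  obtain ⟨z, hzG, hinf⟩ := happrox a <|
    G.exists_abs_lt_abs_of_lt_of_lt hxG hyG (hxa.lt_of_ne (hne hxG)) (hay.lt_of_ne' (hne hyG))
  refine Or.inr (Or.inr ⟨z, hzG, ?_⟩)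
  rcases (hne hzG).lt_or_gt with hza | haz
  · exact Or.inl ⟨hza, fun c hc => G.notMem_Ioc_of_forall_abs_sub_lt hzG hinf hc⟩
  · exact Or.inr ⟨haz, fun c hc => G.notMem_Ico_of_forall_abs_sub_lt hzG hinf hc⟩

/-- If `G ≤ H` are divisible ordered abelian groups such that every `x ∈ H`
bounded by an element of `G` is infinitesimally close to an element of `G`,
then no element of `H` realizes a cut over `G`: every `a ∈ H ∖ G` is above
`G`, below `G`, or realizes a type `b⁺` or `b⁻` for some `b ∈ G`. -/
theorem no_cut_of_infinitesimal_approximation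
    {H : Type*} [AddCommGroup H] [LinearOrder H] [IsOrderedAddMonoid H] (G : AddSubgroup H)
    (hHdiv : ∀ x : H, ∀ n : ℕ, 0 < n → ∃ y : H, n • y = x)
    (hGdiv : ∀ x ∈ G, ∀ n : ℕ, 0 < n → ∃ y ∈ G, n • y = x)
    (happrox : ∀ x : H, (∃ y ∈ G, |x| < |y|) →
      ∃ z ∈ G, ∀ g ∈ G, 0 < g → |x - z| < g) :
    ∀ a : H, a ∉ G →
      (∀ x ∈ G, x < a) ∨ (∀ x ∈ G, a < x) ∨
      (∃ b ∈ G, (b < a ∧ ∀ c ∈ G, ¬ (b < c ∧ c ≤ a)) ∨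
                (a < b ∧ ∀ c ∈ G, ¬ (a ≤ c ∧ c < b))) :=
  no_cut_of_infinitesimal_approximation_general G happrox
end
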